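/- arXiv:1903.02287 — 2 statements merged into one kernel-verified Lean document; each statement's English description precedes it below -/
import Mathlib

section
/- A finite commutative ring R is a field if and only if its nil clean divisor graph contains no 3-cycle (equivalently, is triangle-free), assuming |R| > 2. -/
def IsNilCleanElem {R : Type*} [CommRing R] (x : R) : Prop :=
  ∃ e n : R, IsIdempotentElem e ∧ IsNilpotent n ∧ x = e + n

def NCVertex {R : Type*} [CommRing R] (x : R) : Prop :=
  x ≠ 0 ∧ ∃ y : R, y ≠ 0 ∧ y ≠ x ∧ IsNilCleanElem (x * y)

def NCAdj {R : Type*} [CommRing R] (x y : R) : Prop :=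
  x ≠ y ∧ NCVertex x ∧ NCVertex y ∧ IsNilCleanElem (x * y)

/-!
In a field the only nil clean elements are `0` and `1`, so adjacent vertices are mutually inverse;
two edges `xy`, `yz` then force `x = z`. Conversely, a finite ring that is not a field has a nonzero
nonunit `a`, and some power `a ^ n` (`n > 0`) is idempotent. If `a ^ n = 0`, then `a` is a nonzero
nilpotent and `a, 1, 1 + a` is a triangle; otherwise `e = a ^ n` is an idempotent other than `0`
and `1`, and `e, 1 - e, 1` is a triangle.
-/

def HasNCTriangle (R : Type*) [CommRing R] : Prop :=
  ∃ x y z : R, NCAdj x y ∧ NCAdj y z ∧ NCAdj x z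

section NilClean

variable {R : Type*} [CommRing R]

theorem IsIdempotentElem.isNilCleanElem {e : R} (he : IsIdempotentElem e) : IsNilCleanElem e :=
  ⟨e, 0, he, .zero, (add_zero e).symm⟩

theorem IsNilpotent.isNilCleanElem {n : R} (hn : IsNilpotent n) : IsNilCleanElem n :=
  ⟨0, n, .zero, hn, (zero_add n).symm⟩

theorem IsNilpotent.isNilCleanElem_one_add {n : R} (hn : IsNilpotent n) :
    IsNilCleanElem (1 + n) :=
  ⟨1, n, .one, hn, rfl⟩

theorem IsNilCleanElem.eq_zero_or_eq_one [IsDomain R] {x : R} (hx : IsNilCleanElem x) :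
    x = 0 ∨ x = 1 := by
  obtain ⟨e, n, he, hn, rfl⟩ := hx
  rw [hn.eq_zero, add_zero]
  exact IsIdempotentElem.iff_eq_zero_or_one.mp he

theorem ncAdj_of_ne {x y : R} (hx : x ≠ 0) (hy : y ≠ 0) (hxy : x ≠ y)
    (h : IsNilCleanElem (x * y)) : NCAdj x y :=
  ⟨hxy, ⟨hx, y, hy, hxy.symm, h⟩, ⟨hy, x, hx, hxy, mul_comm x y ▸ h⟩, h⟩

theorem NCAdj.mul_eq_one [IsDomain R] {x y : R} (h : NCAdj x y) : x * y = 1 :=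
  h.2.2.2.eq_zero_or_eq_one.resolve_left (mul_ne_zero h.2.1.1 h.2.2.1.1)

theorem not_hasNCTriangle [IsDomain R] : ¬ HasNCTriangle R := by
  rintro ⟨x, y, z, hxy, hyz, hxz⟩
  exact hxz.1 (left_inv_eq_right_inv hxy.mul_eq_one hyz.mul_eq_one)

theorem hasNCTriangle_of_isNilpotent {a : R} (ha0 : a ≠ 0) (ha : IsNilpotent a) :
    HasNCTriangle R := by
  have : Nontrivial R := ⟨⟨a, 0, ha0⟩⟩
  have h1a0 : 1 + a ≠ 0 := ha.isUnit_one_add.ne_zero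
  have ha1 : a ≠ 1 := fun h => not_isNilpotent_one (h ▸ ha)
  refine ⟨a, 1, 1 + a, ncAdj_of_ne ha0 one_ne_zero ha1 ?_,
    ncAdj_of_ne one_ne_zero h1a0 (by simpa using ha0) ?_,
    ncAdj_of_ne ha0 h1a0 (by simp) ?_⟩
  · simpa using ha.isNilCleanElem
  · simpa using ha.isNilCleanElem_one_add
  · exact (Commute.all a (1 + a)).isNilpotent_mul_right ha |>.isNilCleanElem

theorem hasNCTriangle_of_isIdempotentElem {e : R} (he : IsIdempotentElem e) (he0 : e ≠ 0)
    (he1 : e ≠ 1) : HasNCTriangle R := by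
  have : Nontrivial R := ⟨⟨e, 0, he0⟩⟩
  have h1e0 : 1 - e ≠ 0 := sub_ne_zero.mpr he1.symm
  -- `e = 1 - e` would give `e = e * e = e * (1 - e) = 0`.
  have hne : e ≠ 1 - e := fun h => he0 (by rw [← he.eq, ← he.mul_one_sub_self, ← h])
  refine ⟨e, 1 - e, 1, ncAdj_of_ne he0 h1e0 hne ?_,
    ncAdj_of_ne h1e0 one_ne_zero (by simpa using he0) ?_,
    ncAdj_of_ne he0 one_ne_zero he1 ?_⟩
  · rw [he.mul_one_sub_self]
    exact IsNilpotent.zero.isNilCleanElem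
  · simpa using he.one_sub.isNilCleanElem
  · simpa using he.isNilCleanElem

end NilClean

theorem pow_add_mul_sub_eq_pow {M : Type*} [Monoid M] {a : M} {i j : ℕ} (hij : i ≤ j)
    (h : a ^ i = a ^ j) {k : ℕ} (hk : i ≤ k) (t : ℕ) : a ^ (k + t * (j - i)) = a ^ k := by
  have hi : a ^ (i + t * (j - i)) = a ^ i := by
    induction t with
    | zero => simp
    | succ t ih =>
      rw [add_one_mul, ← add_assoc, pow_add, ih, ← pow_add, Nat.add_sub_cancel' hij, h]
  rw [← Nat.sub_add_cancel hk, add_assoc, pow_add, hi, ← pow_add]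

theorem exists_pow_isIdempotentElem {M : Type*} [Monoid M] [Finite M] (a : M) :
    ∃ n, 0 < n ∧ IsIdempotentElem (a ^ n) := by
  obtain ⟨i, j, hne, h⟩ := Finite.exists_ne_map_eq_of_infinite (fun n : ℕ => a ^ n)
  wlog hij : i < j generalizing i j
  · exact this j i hne.symm h.symm (by omega)
  -- Powers are periodic with period `j - i` from `i` on, so `n = (i + 1) * (j - i)` works.
  have hd : 0 < j - i := by omega
  refine ⟨(i + 1) * (j - i), by positivity, ?_⟩
  rw [IsIdempotentElem, ← pow_add]
  exact pow_add_mul_sub_eq_pow hij.le h (by nlinarith) (i + 1)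

theorem exists_isNilpotent_or_isIdempotentElem_of_not_isField {R : Type*} [CommRing R] [Finite R]
    [Nontrivial R] (hR : ¬ IsField R) :
    (∃ a : R, a ≠ 0 ∧ IsNilpotent a) ∨ ∃ e : R, IsIdempotentElem e ∧ e ≠ 0 ∧ e ≠ 1 := by
  obtain ⟨a, ha0, ha⟩ := Ring.exists_not_isUnit_of_not_isField hR
  obtain ⟨n, hn, he⟩ := exists_pow_isIdempotentElem a
  by_cases hzero : a ^ n = 0
  · exact .inl ⟨a, ha0, n, hzero⟩
  · refine .inr ⟨a ^ n, he, hzero, fun hone => ha ?_⟩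
    exact (isUnit_pow_iff hn.ne').mp (hone ▸ isUnit_one)

theorem stmt9_general {R : Type*} [CommRing R] [Fintype R] [Nontrivial R] :
    IsField R ↔
      ¬ ∃ x y z : R, NCAdj x y ∧ NCAdj y z ∧ NCAdj x z := by
  refine ⟨fun hF => @not_hasNCTriangle R _ hF.isDomain, fun hno => ?_⟩
  by_contra hR
  rcases exists_isNilpotent_or_isIdempotentElem_of_not_isField hR with
    ⟨a, ha0, ha⟩ | ⟨e, he, he0, he1⟩
  · exact hno (hasNCTriangle_of_isNilpotent ha0 ha)
  · exact hno (hasNCTriangle_of_isIdempotentElem he he0 he1)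

theorem stmt9 {R : Type*} [CommRing R] [Fintype R] [Nontrivial R]
    (hcard : 2 < Fintype.card R) :
    IsField R ↔
      ¬ ∃ x y z : R, NCAdj x y ∧ NCAdj y z ∧ NCAdj x z :=
  stmt9_general
end

section
/- For a prime p > 3 with p ≡ 2 (mod 3), in the nil clean divisor graph of ℤ/(3p) the vertices 1 and 2 are not adjacent and have no common neighbor, and hence the diameter of the graph is exactly 3. -/
def NCWithinThree {R : Type*} [CommRing R] (x y : R) : Prop :=
  NCAdj x y ∨ (∃ a, NCAdj x a ∧ NCAdj a y) ∨ (∃ a b, NCAdj x a ∧ NCAdj a b ∧ NCAdj b y)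

section CommRing

variable {R S : Type*} [CommRing R] [CommRing S] {x y : R}

theorem IsIdempotentElem.isNilCleanElem_s18 (h : IsIdempotentElem x) : IsNilCleanElem x :=
  ⟨x, 0, h, IsNilpotent.zero, (add_zero x).symm⟩

theorem IsNilCleanElem.map (f : R →+* S) (h : IsNilCleanElem x) : IsNilCleanElem (f x) := by
  obtain ⟨e, n, he, hn, rfl⟩ := h
  exact ⟨f e, f n, he.map f, hn.map f, map_add f e n⟩

theorem isNilCleanElem_iff_isIdempotentElem [IsReduced R] :
    IsNilCleanElem x ↔ IsIdempotentElem x := by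
  refine ⟨?_, IsIdempotentElem.isNilCleanElem_s18⟩
  rintro ⟨e, n, he, hn, rfl⟩
  rwa [hn.eq_zero, add_zero]

theorem ncAdj_iff : NCAdj x y ↔ x ≠ y ∧ x ≠ 0 ∧ y ≠ 0 ∧ IsNilCleanElem (x * y) := by
  refine ⟨fun ⟨hxy, hx, hy, h⟩ => ⟨hxy, hx.1, hy.1, h⟩, fun ⟨hxy, hx, hy, h⟩ => ?_⟩
  exact ⟨hxy, ⟨hx, y, hy, hxy.symm, h⟩, ⟨hy, x, hx, hxy, by rwa [mul_comm]⟩, h⟩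

theorem NCAdj.symm (h : NCAdj x y) : NCAdj y x := by
  obtain ⟨hxy, hx, hy, hnc⟩ := ncAdj_iff.mp h
  exact ncAdj_iff.mpr ⟨hxy.symm, hy, hx, by rwa [mul_comm]⟩

theorem NCAdj.map (e : R ≃+* S) (h : NCAdj x y) : NCAdj (e x) (e y) := by
  obtain ⟨hxy, hx, hy, hnc⟩ := ncAdj_iff.mp h
  refine ncAdj_iff.mpr ⟨e.injective.ne hxy, (map_ne_zero_iff e e.injective).mpr hx,
    (map_ne_zero_iff e e.injective).mpr hy, ?_⟩
  rw [← map_mul]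
  exact hnc.map e.toRingHom

theorem NCWithinThree.map (e : R ≃+* S) (h : NCWithinThree x y) : NCWithinThree (e x) (e y) := by
  rcases h with h | ⟨a, hxa, hay⟩ | ⟨a, b, hxa, hab, hby⟩
  · exact Or.inl (h.map e)
  · exact Or.inr (Or.inl ⟨e a, hxa.map e, hay.map e⟩)
  · exact Or.inr (Or.inr ⟨e a, e b, hxa.map e, hab.map e, hby.map e⟩)

theorem NCWithinThree.ncVertex_left (h : NCWithinThree x y) : NCVertex x := by
  rcases h with h | ⟨_, h, _⟩ | ⟨_, _, h, _, _⟩ <;> exact h.2.1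

theorem IsIdempotentElem.eq_zero_of_two_mul {a : R} (ha : IsIdempotentElem a)
    (h2a : IsIdempotentElem (2 * a)) (h2 : IsUnit (2 : R)) : a = 0 := by
  have h2a_zero : 2 * a = 0 := by
    have h4 : 2 * a + 2 * a = 2 * a := by
      calc 2 * a + 2 * a = 2 * 2 * (a * a) := by rw [ha.eq]; ring
        _ = 2 * a := by rw [← h2a.eq]; ring
    simpa using h4
  exact (h2.mul_right_eq_zero).mp h2a_zero

variable [IsReduced R]

theorem not_ncAdj_one_two [Nontrivial R] (h2 : IsUnit (2 : R)) : ¬ NCAdj (1 : R) 2 := by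
  intro h
  have hidem : IsIdempotentElem (2 : R) := by
    simpa [isNilCleanElem_iff_isIdempotentElem] using (ncAdj_iff.mp h).2.2.2
  have h21 : (2 : R) = 1 := h2.mul_left_cancel (by rw [hidem.eq, mul_one])
  exact one_ne_zero (by linear_combination h21 : (1 : R) = 0)

theorem not_exists_ncAdj_one_ncAdj_two (h2 : IsUnit (2 : R)) :
    ¬ ∃ a : R, NCAdj 1 a ∧ NCAdj a 2 := by
  rintro ⟨a, h1a, ha2⟩
  obtain ⟨-, -, ha0, ha⟩ := ncAdj_iff.mp h1a
  have h2a := (ncAdj_iff.mp ha2).2.2.2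
  rw [one_mul, isNilCleanElem_iff_isIdempotentElem] at ha
  rw [mul_comm, isNilCleanElem_iff_isIdempotentElem] at h2a
  exact ha0 (ha.eq_zero_of_two_mul h2a h2)

end CommRing

section FieldProd

variable {K L : Type*} [Field K] [Field L]

theorem ncAdj_fst_snd {s : K} {t : L} (hs : s ≠ 0) (ht : t ≠ 0) :
    NCAdj ((s, 0) : K × L) (0, t) := by
  refine ncAdj_iff.mpr ⟨fun h => hs (congrArg Prod.fst h), fun h => hs (congrArg Prod.fst h),
    fun h => ht (congrArg Prod.snd h), ?_⟩
  simpa using IsIdempotentElem.zero.isNilCleanElem_s18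

theorem exists_ne_zero_ncAdj_fst {x : K × L} (hx : x.2 ≠ 0) : ∃ s ≠ 0, NCAdj x (s, 0) := by
  have hne : ∀ s : K, x ≠ (s, 0) := fun s h => hx (congrArg Prod.snd h)
  have hx0 : x ≠ 0 := fun h => hx (congrArg Prod.snd h)
  by_cases hx1 : x.1 = 0
  · refine ⟨1, one_ne_zero, ncAdj_iff.mpr ⟨hne 1, hx0, by simp, ?_⟩⟩
    have : x * (1, 0) = 0 := Prod.ext (by simp [hx1]) (by simp)
    exact this ▸ IsIdempotentElem.zero.isNilCleanElem_s18
  · refine ⟨x.1⁻¹, inv_ne_zero hx1, ncAdj_iff.mpr ⟨hne _, hx0, by simpa using hx1, ?_⟩⟩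
    have : x * (x.1⁻¹, 0) = (1, 0) := Prod.ext (by simp [hx1]) (by simp)
    refine this ▸ IsIdempotentElem.isNilCleanElem_s18 ?_
    exact Prod.ext (mul_one 1) (mul_zero 0)

theorem exists_ne_zero_eq_or_ncAdj_fst {x : K × L} (hx : x ≠ 0) :
    ∃ s ≠ 0, x = (s, 0) ∨ NCAdj x (s, 0) := by
  by_cases hx2 : x.2 = 0
  · exact ⟨x.1, fun h => hx (Prod.ext h hx2), Or.inl (Prod.ext rfl hx2)⟩
  · obtain ⟨s, hs, h⟩ := exists_ne_zero_ncAdj_fst hx2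
    exact ⟨s, hs, Or.inr h⟩

theorem exists_ne_zero_eq_or_ncAdj_snd {y : K × L} (hy : y ≠ 0) :
    ∃ t ≠ 0, (0, t) = y ∨ NCAdj (0, t) y := by
  have hy' : RingEquiv.prodComm y ≠ 0 := (map_ne_zero_iff _ RingEquiv.prodComm.injective).mpr hy
  obtain ⟨t, ht, h⟩ := exists_ne_zero_eq_or_ncAdj_fst hy'
  refine ⟨t, ht, ?_⟩
  rcases h with h | h
  · exact Or.inl (congrArg Prod.swap h).symm
  · exact Or.inr (h.map RingEquiv.prodComm).symm

theorem ncWithinThree_prod {x y : K × L} (hx : x ≠ 0) (hy : y ≠ 0) : NCWithinThree x y := by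
  obtain ⟨s, hs, rfl | hxa⟩ := exists_ne_zero_eq_or_ncAdj_fst hx <;>
    obtain ⟨t, ht, rfl | hby⟩ := exists_ne_zero_eq_or_ncAdj_snd hy
  · exact Or.inl (ncAdj_fst_snd hs ht)
  · exact Or.inr (Or.inl ⟨_, ncAdj_fst_snd hs ht, hby⟩)
  · exact Or.inr (Or.inl ⟨_, hxa, ncAdj_fst_snd hs ht⟩)
  · exact Or.inr (Or.inr ⟨_, _, hxa, ncAdj_fst_snd hs ht, hby⟩)

theorem ncWithinThree_of_ringEquiv_prod {R : Type*} [CommRing R] (e : R ≃+* K × L) {x y : R}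
    (hx : x ≠ 0) (hy : y ≠ 0) : NCWithinThree x y := by
  have h := (ncWithinThree_prod ((map_ne_zero_iff e e.injective).mpr hx)
    ((map_ne_zero_iff e e.injective).mpr hy)).map e.symm
  simpa using h

end FieldProd

theorem stmt18_general (p : ℕ) (hp : p.Prime) (hp3 : 3 < p) :
    NCVertex (1 : ZMod (3 * p)) ∧ NCVertex (2 : ZMod (3 * p)) ∧
    ¬ NCAdj (1 : ZMod (3 * p)) 2 ∧
    (¬ ∃ a : ZMod (3 * p), NCAdj 1 a ∧ NCAdj a 2) ∧
    (∀ x y : ZMod (3 * p), NCVertex x → NCVertex y → x ≠ y →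
      (NCAdj x y ∨ (∃ a, NCAdj x a ∧ NCAdj a y) ∨
        (∃ a b, NCAdj x a ∧ NCAdj a b ∧ NCAdj b y))) := by
  have : Fact p.Prime := ⟨hp⟩
  have : Fact (1 < 3 * p) := ⟨by omega⟩
  have hcop : Nat.Coprime 3 p := (Nat.coprime_primes Nat.prime_three hp).2 (by omega)
  let e := ZMod.chineseRemainder hcop
  have : IsReduced (ZMod (3 * p)) := isReduced_of_injective e e.injective
  have h2 : IsUnit (2 : ZMod (3 * p)) := by
    have hodd : Nat.Coprime 2 (3 * p) :=
      Nat.Coprime.mul_right (by norm_num) ((Nat.coprime_primes Nat.prime_two hp).2 (by omega))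
    exact_mod_cast (ZMod.isUnit_iff_coprime 2 (3 * p)).mpr hodd
  have hwithin : ∀ x y : ZMod (3 * p), x ≠ 0 → y ≠ 0 → NCWithinThree x y :=
    fun _ _ => ncWithinThree_of_ringEquiv_prod e
  refine ⟨(hwithin 1 2 one_ne_zero h2.ne_zero).ncVertex_left,
    (hwithin 2 1 h2.ne_zero one_ne_zero).ncVertex_left, not_ncAdj_one_two h2,
    not_exists_ncAdj_one_ncAdj_two h2, fun x y hx hy _ => hwithin x y hx.1 hy.1⟩

theorem stmt18 (p : ℕ) (hp : p.Prime) (hp3 : 3 < p) (hmod : p % 3 = 2) :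
    NCVertex (1 : ZMod (3 * p)) ∧ NCVertex (2 : ZMod (3 * p)) ∧
    ¬ NCAdj (1 : ZMod (3 * p)) 2 ∧
    (¬ ∃ a : ZMod (3 * p), NCAdj 1 a ∧ NCAdj a 2) ∧
    (∀ x y : ZMod (3 * p), NCVertex x → NCVertex y → x ≠ y →
      (NCAdj x y ∨ (∃ a, NCAdj x a ∧ NCAdj a y) ∨
        (∃ a b, NCAdj x a ∧ NCAdj a b ∧ NCAdj b y))) :=
  stmt18_general p hp hp3
end
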